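/- arXiv:2001.05191 — 3 statements merged into one kernel-verified Lean document; each statement's English description precedes it below -/
import Mathlib

section
/- Let $H \subseteq G$ be a subgraph of a directed acyclic graph $G$. Then $\tilde Q_H$ is a face of $\tilde Q_G$ if and only if the component multigraph $H_{comp}$ is loopless and acyclic, i.e., (1) every edge of $G$ joining two vertices in the same connected component of $H^{un}$ is already an edge of $H$, and (2) there is no sequence of connected components $C_1, C_2, \dots, C_k = C_1$ of $H^{un}$ with $k \geq 2$ such that for each $i$ there is an edge of $E(G) \setminus E(H)$ from a vertex of $C_i$ to a vertex of $C_{i+1}$. -/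
/-!
`tQ n EH` is a face of `tQ n E` iff some functional `c ⬝ᵥ ·` is nonnegative on `tQ n E` and
vanishes exactly on `tQ n EH`. Evaluated at the vertices `e_i - e_j`, this says that `c` is
constant along the edges of `H` (hence on the components of `H^un`) and strictly decreasing
along the remaining edges of `G`, i.e. along the edges of `H_comp`. Such a potential rules out
loops and cycles in `H_comp`; conversely, if `H_comp` is acyclic, the number of vertices
reachable from `u` in `H_comp` is one.

On the geometric side, the face of a convex hull cut out by a supporting hyperplane is the
hull of the generators lying on it, and for `i ≠ j` the point `e_i - e_j` lies in `tQ n EH` only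
if `(i, j) ∈ EH`.
-/

/-- The vector `e_i - e_j` associated to the directed edge `e = (i, j)`. -/
def vecOf (n : ℕ) (e : Fin n × Fin n) : Fin n → ℝ :=
  fun k => (if k = e.1 then 1 else 0) - (if k = e.2 then 1 else 0)

/-- The root polytope `tilde Q_G = conv{0, e_i - e_j : (i,j) ∈ E(G)}`. -/
def tQ (n : ℕ) (E : Set (Fin n × Fin n)) : Set (Fin n → ℝ) :=
  convexHull ℝ ({0} ∪ vecOf n '' E)

/-- `F` is a face of `P`: cut out by a supporting hyperplane. -/
def IsFace (n : ℕ) (P F : Set (Fin n → ℝ)) : Prop :=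
  ∃ (c : Fin n → ℝ) (a : ℝ), (∀ x ∈ P, a ≤ ∑ i, c i * x i) ∧
    F = {x ∈ P | ∑ i, c i * x i = a}

/-- Undirected adjacency underlying the subgraph `H`. -/
def UAdj {n : ℕ} (E : Set (Fin n × Fin n)) (u v : Fin n) : Prop :=
  (u, v) ∈ E ∨ (v, u) ∈ E

/-- `u` and `v` lie in the same connected component of the underlying undirected graph. -/
def SameComp {n : ℕ} (E : Set (Fin n × Fin n)) : Fin n → Fin n → Prop :=
  Relation.ReflTransGen (UAdj E)

/-- The edge relation of the component multigraph `H_comp` (on vertices of the ambient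
graph, identified up to connected components of `H^un`): `u` is in the source component of
some edge of `E(G) \ E(H)` whose target component contains `v`. -/
def HCompRel {n : ℕ} (E EH : Set (Fin n × Fin n)) (u v : Fin n) : Prop :=
  ∃ e ∈ E, e ∉ EH ∧ SameComp EH u e.1 ∧ SameComp EH e.2 v

section ConvexHull

variable {𝕜 V : Type*} [Field 𝕜] [LinearOrder 𝕜] [IsStrictOrderedRing 𝕜] [AddCommGroup V]
  [Module 𝕜 V] (φ : V →ₗ[𝕜] 𝕜) {S : Set V} {a : 𝕜}

theorem le_apply_of_mem_convexHull (hS : ∀ y ∈ S, a ≤ φ y) {x : V} (hx : x ∈ convexHull 𝕜 S) :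
    a ≤ φ x :=
  convexHull_min hS (convex_halfSpace_ge φ.isLinear a) hx

theorem sep_convexHull_eq_convexHull_sep (hS : ∀ y ∈ S, a ≤ φ y) :
    {x ∈ convexHull 𝕜 S | φ x = a} = convexHull 𝕜 {y ∈ S | φ y = a} := by
  refine subset_antisymm ?_ (convexHull_min (fun y hy => ⟨subset_convexHull 𝕜 S hy.1, hy.2⟩)
    ((convex_convexHull 𝕜 S).inter (convex_hyperplane φ.isLinear a)))
  rintro _ ⟨hx, hφx⟩
  rw [convexHull_eq, Set.mem_ofPred_eq] at hx
  obtain ⟨ι, t, w, z, hw₀, hw₁, hz, rfl⟩ := hx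
  have hsum : ∑ i ∈ t, w i * (φ (z i) - a) = 0 := by
    rw [Finset.centerMass_eq_of_sum_1 _ _ hw₁, map_sum] at hφx
    simp only [map_smul, smul_eq_mul] at hφx
    simp only [mul_sub, Finset.sum_sub_distrib, hφx, ← Finset.sum_mul, hw₁, one_mul, sub_self]
  have hterm := (Finset.sum_eq_zero_iff_of_nonneg fun i hi =>
    mul_nonneg (hw₀ i hi) (sub_nonneg.2 (hS _ (hz i hi)))).1 hsum
  classical
  rw [← Finset.centerMass_filter_ne_zero]
  refine Finset.centerMass_mem_convexHull _ (fun i hi => hw₀ i (Finset.mem_filter.1 hi).1)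
    (by rw [Finset.sum_filter_ne_zero, hw₁]; exact one_pos) fun i hi => ?_
  obtain ⟨hit, hwi⟩ := Finset.mem_filter.1 hi
  exact ⟨hz i hit, sub_eq_zero.1 ((mul_eq_zero.1 (hterm i hit)).resolve_left hwi)⟩

end ConvexHull

section RootPolytope

variable {n : ℕ}

theorem dotProduct_vecOf (c : Fin n → ℝ) (e : Fin n × Fin n) :
    c ⬝ᵥ vecOf n e = c e.1 - c e.2 := by
  simp [dotProduct, vecOf, mul_sub, Finset.sum_sub_distrib]

theorem vecOf_apply_sub_le_two (e : Fin n × Fin n) (k l : Fin n) :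
    vecOf n e k - vecOf n e l ≤ 2 := by
  unfold vecOf; split_ifs <;> norm_num

theorem eq_of_vecOf_apply_sub_eq_two {e : Fin n × Fin n} {k l : Fin n}
    (h : vecOf n e k - vecOf n e l = 2) : (k, l) = e := by
  unfold vecOf at h
  split_ifs at h <;> norm_num at h
  exact Prod.ext ‹_› ‹_›

theorem vecOf_apply_fst_sub_snd {e : Fin n × Fin n} (he : e.1 ≠ e.2) :
    vecOf n e e.1 - vecOf n e e.2 = 2 := by
  norm_num [vecOf, he, he.symm]

theorem zero_mem_tQ (E : Set (Fin n × Fin n)) : 0 ∈ tQ n E :=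
  subset_convexHull ℝ _ (Or.inl rfl)

theorem vecOf_mem_tQ {E : Set (Fin n × Fin n)} {e : Fin n × Fin n} (he : e ∈ E) :
    vecOf n e ∈ tQ n E :=
  subset_convexHull ℝ _ (Or.inr ⟨e, he, rfl⟩)

theorem mem_of_vecOf_mem_tQ {E : Set (Fin n × Fin n)} {e : Fin n × Fin n} (he : e.1 ≠ e.2)
    (h : vecOf n e ∈ tQ n E) : e ∈ E := by
  -- `x ↦ x e.2 - x e.1` attains its minimum `-2` over `tQ n E` only at `vecOf n e`
  set φ := dotProductBilin ℝ ℝ (-vecOf n e)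
  have hφ : ∀ f, φ (vecOf n f) = vecOf n e f.2 - vecOf n e f.1 := fun f => by
    simp only [φ, dotProductBilin_apply_apply, dotProduct_vecOf, Pi.neg_apply]; ring
  have hS : ∀ y ∈ {0} ∪ vecOf n '' E, -2 ≤ φ y := by
    rintro _ (rfl | ⟨f, -, rfl⟩)
    · simp
    · linarith [hφ f, vecOf_apply_sub_le_two e f.1 f.2]
  have hx : vecOf n e ∈ {x ∈ tQ n E | φ x = -2} :=
    ⟨h, by linarith [hφ e, vecOf_apply_fst_sub_snd he]⟩
  rw [tQ, sep_convexHull_eq_convexHull_sep φ hS] at hx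
  obtain ⟨_, (rfl | ⟨f, hf, rfl⟩), hy⟩ := convexHull_nonempty_iff.1 ⟨_, hx⟩
  · simp at hy
  · have := eq_of_vecOf_apply_sub_eq_two (show vecOf n e f.1 - vecOf n e f.2 = 2 by
      linarith [hφ f])
    rw [Prod.mk.eta] at this
    exact this ▸ hf

end RootPolytope

theorem Relation.ncard_setOf_transGen_lt {α : Type*} [Finite α] {r : α → α → Prop}
    (hr : ∀ a, ¬ Relation.TransGen r a a) {a b : α} (hab : r a b) :
    {c | Relation.TransGen r b c}.ncard < {c | Relation.TransGen r a c}.ncard :=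
  Set.ncard_lt_ncard ⟨fun _ hc => Relation.TransGen.head hab hc,
    fun h => hr b (h (Relation.TransGen.single hab))⟩

section ComponentMultigraph

variable {n : ℕ} {E EH : Set (Fin n × Fin n)}

theorem SameComp.symm {u v : Fin n} (h : SameComp EH u v) : SameComp EH v u :=
  have : Std.Symm (UAdj EH) := ⟨fun _ _ => Or.symm⟩
  symm_of (Relation.ReflTransGen (UAdj EH)) h

theorem hCompRel_congr_left {u u' v : Fin n} (h : SameComp EH u u') :
    HCompRel E EH u v ↔ HCompRel E EH u' v :=
  ⟨fun ⟨e, he, heH, h₁, h₂⟩ => ⟨e, he, heH, h.symm.trans h₁, h₂⟩,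
    fun ⟨e, he, heH, h₁, h₂⟩ => ⟨e, he, heH, h.trans h₁, h₂⟩⟩

structure IsCompPotential (E EH : Set (Fin n × Fin n)) (c : Fin n → ℝ) : Prop where
  eq_of_mem : ∀ f ∈ EH, c f.1 = c f.2
  lt_of_notMem : ∀ e ∈ E, e ∉ EH → c e.2 < c e.1

namespace IsCompPotential

variable {c : Fin n → ℝ}

theorem eq_of_sameComp (hc : IsCompPotential E EH c) {u v : Fin n} (h : SameComp EH u v) :
    c u = c v := by
  induction h with
  | refl => rfl
  | tail _ hstep ih =>
    exact ih.trans (hstep.elim (hc.eq_of_mem _) fun h => (hc.eq_of_mem _ h).symm)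

theorem lt_of_hCompRel (hc : IsCompPotential E EH c) {u v : Fin n} (h : HCompRel E EH u v) :
    c v < c u := by
  obtain ⟨e, he, heH, h₁, h₂⟩ := h
  rw [hc.eq_of_sameComp h₁, ← hc.eq_of_sameComp h₂]
  exact hc.lt_of_notMem e he heH

theorem lt_of_transGen (hc : IsCompPotential E EH c) {u v : Fin n}
    (h : Relation.TransGen (HCompRel E EH) u v) : c v < c u := by
  induction h with
  | single h => exact hc.lt_of_hCompRel h
  | tail _ h ih => exact (hc.lt_of_hCompRel h).trans ih

theorem mem_of_sameComp (hc : IsCompPotential E EH c) {e : Fin n × Fin n} (he : e ∈ E)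
    (h : SameComp EH e.1 e.2) : e ∈ EH :=
  by_contra fun heH => (hc.lt_of_notMem e he heH).ne' (hc.eq_of_sameComp h)

end IsCompPotential

theorem exists_isCompPotential (hacyc : ∀ u : Fin n, ¬ Relation.TransGen (HCompRel E EH) u u) :
    ∃ c, IsCompPotential E EH c := by
  refine ⟨fun u => ({v | Relation.TransGen (HCompRel E EH) u v}.ncard : ℝ), fun f hf => ?_,
    fun e he heH => ?_⟩
  · have h : SameComp EH f.1 f.2 := Relation.ReflTransGen.single (Or.inl hf)
    simp only [Relation.TransGen.head'_iff, hCompRel_congr_left h]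
  · exact_mod_cast Relation.ncard_setOf_transGen_lt hacyc
      ⟨e, he, heH, Relation.ReflTransGen.refl, Relation.ReflTransGen.refl⟩

theorem exists_isCompPotential_iff :
    (∃ c, IsCompPotential E EH c) ↔
      ((∀ e ∈ E, SameComp EH e.1 e.2 → e ∈ EH) ∧
        ∀ u : Fin n, ¬ Relation.TransGen (HCompRel E EH) u u) :=
  ⟨fun ⟨_, hc⟩ => ⟨fun _ he => hc.mem_of_sameComp he, fun _ h => (hc.lt_of_transGen h).false⟩,
    fun h => exists_isCompPotential h.2⟩

theorem isFace_tQ_of_isCompPotential (hH : EH ⊆ E) {c : Fin n → ℝ}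
    (hc : IsCompPotential E EH c) : IsFace n (tQ n E) (tQ n EH) := by
  set φ := dotProductBilin ℝ ℝ c
  have hφ : ∀ f, φ (vecOf n f) = c f.1 - c f.2 := dotProduct_vecOf c
  have hS : ∀ y ∈ {0} ∪ vecOf n '' E, 0 ≤ φ y := by
    rintro _ (rfl | ⟨f, hf, rfl⟩)
    · simp
    · by_cases hfH : f ∈ EH
      · rw [hφ, hc.eq_of_mem f hfH, sub_self]
      · linarith [hφ f, hc.lt_of_notMem f hf hfH]
  have hvert : {y ∈ {0} ∪ vecOf n '' E | φ y = 0} = {0} ∪ vecOf n '' EH := by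
    ext y
    constructor
    · rintro ⟨rfl | ⟨f, hf, rfl⟩, hy⟩
      · exact Or.inl rfl
      · by_contra hfH
        linarith [hφ f, hc.lt_of_notMem f hf fun h => hfH (Or.inr ⟨f, h, rfl⟩)]
    · rintro (rfl | ⟨f, hf, rfl⟩)
      · exact ⟨Or.inl rfl, map_zero φ⟩
      · exact ⟨Or.inr ⟨f, hH hf, rfl⟩, by rw [hφ, hc.eq_of_mem f hf, sub_self]⟩
  exact ⟨c, 0, fun x hx => le_apply_of_mem_convexHull φ hS hx,
    by rw [tQ, tQ, ← hvert, ← sep_convexHull_eq_convexHull_sep φ hS]; rfl⟩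

theorem IsFace.exists_isCompPotential (hE : ∀ e ∈ E, e.1 ≠ e.2)
    (h : IsFace n (tQ n E) (tQ n EH)) : ∃ c, IsCompPotential E EH c := by
  obtain ⟨c, a, hsupp, hF⟩ := h
  have hmemF : ∀ {x}, x ∈ tQ n EH ↔ x ∈ tQ n E ∧ c ⬝ᵥ x = a := fun {x} => by rw [hF]; rfl
  have ha : a = 0 := by simpa using (hmemF.1 (zero_mem_tQ EH)).2.symm
  subst ha
  have heq : ∀ f ∈ EH, c f.1 = c f.2 := fun f hf => by
    simpa [dotProduct_vecOf, sub_eq_zero] using (hmemF.1 (vecOf_mem_tQ hf)).2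
  refine ⟨c, heq, fun e he heH => lt_of_le_of_ne ?_ fun hce => heH ?_⟩
  · have : 0 ≤ c ⬝ᵥ vecOf n e := hsupp _ (vecOf_mem_tQ he)
    rwa [dotProduct_vecOf, sub_nonneg] at this
  · exact mem_of_vecOf_mem_tQ (hE e he)
      (hmemF.2 ⟨vecOf_mem_tQ he, by rw [dotProduct_vecOf, hce, sub_self]⟩)

theorem isFace_tQ_iff_exists_isCompPotential (hE : ∀ e ∈ E, e.1 ≠ e.2) (hH : EH ⊆ E) :
    IsFace n (tQ n E) (tQ n EH) ↔ ∃ c, IsCompPotential E EH c :=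
  ⟨IsFace.exists_isCompPotential hE, fun ⟨_, hc⟩ => isFace_tQ_of_isCompPotential hH hc⟩

end ComponentMultigraph

/-- `tilde Q_H` is a face of `tilde Q_G` iff `H_comp` is loopless and acyclic. -/
theorem stmt6 (n : ℕ) (E EH : Set (Fin n × Fin n))
    (hE : ∀ e ∈ E, e.1 < e.2) (hH : EH ⊆ E) :
    IsFace n (tQ n E) (tQ n EH) ↔
      ((∀ e ∈ E, SameComp EH e.1 e.2 → e ∈ EH) ∧
        ∀ u : Fin n, ¬ Relation.TransGen (HCompRel E EH) u u) := by
  rw [isFace_tQ_iff_exists_isCompPotential (fun e he => (hE e he).ne) hH,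
    exists_isCompPotential_iff]
end

section
/- Let $H \subseteq G$ be a subgraph of a directed acyclic graph $G$. Then $Q_H$ is a face of $\tilde Q_G$ if and only if $H$ is path consistent and admissible with respect to $G$. -/
/-- The root polytope `Q_H = conv{e_i - e_j : (i,j) ∈ E(H)}`. -/
def Qp (n : ℕ) (E : Set (Fin n × Fin n)) : Set (Fin n → ℝ) :=
  convexHull ℝ (vecOf n '' E)

/-- `WalkVal E i j k` : there is an undirected walk in `E` from `i` to `j` whose number of
forward edges minus number of backward edges equals `k`. -/
inductive WalkVal {n : ℕ} (E : Set (Fin n × Fin n)) : Fin n → Fin n → ℤ → Prop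
  | nil (v : Fin n) : WalkVal E v v 0
  | fwd {u v w : Fin n} {k : ℤ} : WalkVal E u v k → (v, w) ∈ E → WalkVal E u w (k + 1)
  | bwd {u v w : Fin n} {k : ℤ} : WalkVal E u v k → (w, v) ∈ E → WalkVal E u w (k - 1)

/-- `H` is path consistent. -/
def PathConsistent {n : ℕ} (EH : Set (Fin n × Fin n)) : Prop :=
  ∀ (i j : Fin n) (k₁ k₂ : ℤ), WalkVal EH i j k₁ → WalkVal EH i j k₂ → k₁ = k₂

/-- `H ⊆ G` is admissible with respect to a weight function `w` (increasing by 1 along edges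
of `H`): every directed cycle `c` in the component multigraph `H_comp` (a cyclic sequence of
edges of `E(G) \ E(H)`, the target of each lying in the same component of `H^un` as the
source of the next) satisfies `∑ wd(e) > -|c|`, where `wd(e) = w(source) - w(target)`. -/
def Admissible {n : ℕ} (E EH : Set (Fin n × Fin n)) (w : Fin n → ℤ) : Prop :=
  ∀ (k : ℕ) (c : Fin (k + 1) → Fin n × Fin n),
    (∀ i, c i ∈ E ∧ c i ∉ EH) →
    (∀ i : Fin (k + 1), SameComp EH (c i).2 (c (i + 1)).1) →
    -((k : ℤ) + 1) < ∑ i, (w (c i).1 - w (c i).2)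

/-!
Both sides are equivalent to the existence of `c : Fin n → ℝ` with `c j = c i + 1` on the edges
of `H` and `c j < c i + 1` on the other edges of `G`. Such a `c` gives the supporting hyperplane
`∑ cᵢ xᵢ = -1` of `Q_H` in `tilde Q_G`; conversely a supporting hyperplane can be rescaled to level
`-1`, since `0 ∉ Q_H` by acyclicity. From `c`, path consistency is immediate, and `w = ⌊c⌋` is
admissible because `c - ⌊c⌋` is constant on components, so the fractional parts cancel around every
cycle of `H_comp`. Conversely, given `w`, take `c = w + φ ∘ comp` with `φ` a strict potential on
`H_comp` for the integer lengths `wd(e) + 1`, which are positive around every cycle by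
admissibility; `φ` is a shortest-path potential for these lengths, slightly shortened.
-/

theorem List.IsChain.rel_getElem_add_one {α : Type*} {R : α → α → Prop} {a : α} {l : List α}
    (h : (a :: l).IsChain R) (hlast : ∀ x ∈ (a :: l).getLast?, R x a) (i : Fin (l.length + 1)) :
    R (a :: l)[i.1] (a :: l)[(i + 1).1] := by
  rcases Fin.eq_castSucc_or_eq_last i with ⟨j, rfl⟩ | rfl
  · simp only [Fin.coeSucc_eq_succ, Fin.val_castSucc, Fin.val_succ]
    exact List.isChain_iff_getElem.mp h j (by simp)
  · simpa [List.getLast?_eq_getElem?] using hlast _ (by simp [List.getLast?_eq_getElem?])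

section Potential

variable {V X : Type*} (src tgt : X → V)

/-- Simple walks, as lists of edges, ending at `v`; the empty walk ends at every vertex. -/
def IsPathTo (v : V) (L : List X) : Prop :=
  L.IsChain (fun x y => tgt x = src y) ∧ (L.map tgt).Nodup ∧ ∀ x ∈ L.getLast?, tgt x = v

theorem exists_potential_of_cycle_nonneg [Fintype V] [Finite X] (len : X → ℝ)
    (hcycle : ∀ L : List X, L.IsChain (fun x y => tgt x = src y) →
      (∀ x ∈ L.getLast?, ∀ y ∈ L.head?, tgt x = src y) → L.length ≤ Fintype.card V →
      0 ≤ (L.map len).sum) :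
    ∃ φ : V → ℝ, ∀ x, φ (tgt x) ≤ φ (src x) + len x := by
  have hfin (v : V) : {L | IsPathTo src tgt v L}.Finite :=
    (List.finite_length_le (α := X) (n := Fintype.card V)).subset fun L hL => by
      simpa using hL.2.1.length_le_card
  choose P hP hmin using fun v =>
    Set.exists_min_image _ (fun L => (L.map len).sum) (hfin v) ⟨[], by simp [IsPathTo]⟩
  refine ⟨fun v => ((P v).map len).sum, fun x => ?_⟩
  have hPtgt := hmin (tgt x)
  obtain ⟨hchain, hnodup, hlast⟩ := hP (src x)
  show ((P (tgt x)).map len).sum ≤ ((P (src x)).map len).sum + len x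
  generalize P (src x) = M at hchain hnodup hlast ⊢
  have hMx : (M ++ [x]).IsChain (fun x y => tgt x = src y) :=
    hchain.append (.singleton x) (by simpa using hlast)
  -- if `tgt x` lies on `M`, then `M` splits into a path to `tgt x` and a cycle closed by `x`
  by_cases hx : tgt x ∈ M.map tgt
  · obtain ⟨y, hyM, hy⟩ := List.mem_map.mp hx
    obtain ⟨A, B, rfl⟩ := List.append_of_mem hyM
    have hyBx : (y :: (B ++ [x])).IsChain (fun x y => tgt x = src y) :=
      hMx.suffix ⟨A, by simp⟩
    have hA : IsPathTo src tgt (tgt x) (A ++ [y]) :=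
      ⟨hMx.prefix ⟨B ++ [x], by simp⟩, hnodup.sublist (by simp), by simp [hy]⟩
    have hclose : ∀ a ∈ (B ++ [x]).getLast?, ∀ b ∈ (B ++ [x]).head?, tgt a = src b := by
      intro a ha b hb
      rw [List.getLast?_concat, Option.mem_some_iff] at ha
      rw [← ha, ← hy]
      exact hyBx.rel_head? hb
    have hlen : (B ++ [x]).length ≤ Fintype.card V := by
      have := hnodup.length_le_card
      simp only [List.length_map, List.length_append, List.length_cons, List.length_nil] at this ⊢
      omega
    have hcyc := hcycle (B ++ [x]) hyBx.tail hclose hlen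
    have hAy := hPtgt _ hA
    simp only [List.map_append, List.map_cons, List.map_nil, List.sum_append, List.sum_cons,
      List.sum_nil, add_zero] at hAy hcyc ⊢
    linarith
  · have hMx' : IsPathTo src tgt (tgt x) (M ++ [x]) :=
      ⟨hMx, by simpa [List.nodup_append] using
        ⟨hnodup, fun a ha h => hx (h ▸ List.mem_map_of_mem ha)⟩, by simp⟩
    simpa using hPtgt _ hMx'

theorem exists_strictPotential_of_cycle_pos [Finite V] [Finite X] (len : X → ℤ)
    (hcycle : ∀ (k : ℕ) (c : Fin (k + 1) → X),
      (∀ i, tgt (c i) = src (c (i + 1))) → 0 < ∑ i, len (c i)) :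
    ∃ φ : V → ℝ, ∀ x, φ (tgt x) < φ (src x) + len x := by
  have := Fintype.ofFinite V
  set ε : ℝ := 1 / (Fintype.card V + 1)
  have hε : 0 < ε := by positivity
  have hcardε : Fintype.card V * ε < 1 := by
    rw [mul_one_div, div_lt_one (by positivity)]; linarith
  -- simple cycles have at most `card V` edges, so shortening every edge by `ε` keeps them `≥ 0`
  obtain ⟨φ, hφ⟩ := exists_potential_of_cycle_nonneg src tgt (fun x => len x - ε)
    fun L hL hclose hlen => by
    rcases L with _ | ⟨a, l⟩
    · simp
    have hpos := hcycle l.length (fun i => (a :: l)[i.1])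
      (hL.rel_getElem_add_one fun x hx => hclose x hx a rfl)
    have hsum : ∑ i : Fin (l.length + 1), len (a :: l)[i.1] = ((a :: l).map len).sum :=
      Fin.sum_univ_fun_getElem (a :: l) len
    have hint : (1 : ℝ) ≤ ((a :: l).map len).sum := by exact_mod_cast hsum ▸ hpos
    have hlen' : ((a :: l).length : ℝ) * ε ≤ Fintype.card V * ε := by gcongr
    have hsub (L : List X) :
        (L.map fun x => (len x : ℝ) - ε).sum = ((L.map len).sum : ℝ) - L.length * ε := by
      induction L with
      | nil => simp
      | cons a l ih => simp [ih]; ring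
    linarith [hsub (a :: l)]
  exact ⟨φ, fun x => by linarith [hφ x]⟩

end Potential

theorem convexHull_inter_level_subset {𝕜 E : Type*} [Field 𝕜] [LinearOrder 𝕜]
    [IsStrictOrderedRing 𝕜] [AddCommGroup E] [Module 𝕜 E] (f : E →ₗ[𝕜] 𝕜) {s : Set E} {a : 𝕜}
    (hs : ∀ x ∈ s, a ≤ f x) :
    convexHull 𝕜 s ∩ {x | f x = a} ⊆ convexHull 𝕜 (s ∩ {x | f x = a}) := by
  set T := convexHull 𝕜 (s ∩ {x | f x = a})
  have hT : T ⊆ {x | f x = a} :=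
    convexHull_min Set.inter_subset_right (convex_hyperplane f.isLinear a)
  -- points strictly above the level stay strictly above when mixed with points on it
  have hconvex : Convex 𝕜 ({x | a < f x} ∪ T) := by
    refine convex_iff_openSegment_subset.mpr fun p hp q hq z ⟨α, β, hα, hβ, hαβ, hz⟩ => ?_
    subst hz
    by_cases hpq : p ∈ T ∧ q ∈ T
    · exact Or.inr (convex_convexHull 𝕜 _ hpq.1 hpq.2 hα.le hβ.le hαβ)
    have hfp : a ≤ f p := hp.elim le_of_lt fun h => (hT h).ge
    have hfq : a ≤ f q := hq.elim le_of_lt fun h => (hT h).ge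
    left
    have ha : a = α * a + β * a := by rw [← add_mul, hαβ, one_mul]
    simp only [Set.mem_ofPred_eq, map_add, map_smul, smul_eq_mul]
    rcases not_and_or.mp hpq with hp' | hq'
    · linarith [mul_pos hα (sub_pos.2 (hp.resolve_right hp')), mul_nonneg hβ.le (sub_nonneg.2 hfq)]
    · linarith [mul_nonneg hα.le (sub_nonneg.2 hfp), mul_pos hβ (sub_pos.2 (hq.resolve_right hq'))]
  rintro x ⟨hx, hfx⟩
  have hsub : s ⊆ {x | a < f x} ∪ T := fun y hy =>
    (hs y hy).lt_or_eq.imp id fun h => subset_convexHull 𝕜 _ ⟨hy, h.symm⟩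
  exact (convexHull_min hsub hconvex hx).resolve_left fun h : a < f x => h.ne' hfx

section RootPolytope

variable {n : ℕ}

theorem sum_mul_vecOf (c : Fin n → ℝ) (e : Fin n × Fin n) :
    ∑ i, c i * vecOf n e i = c e.1 - c e.2 := by
  simp [vecOf, mul_sub, Finset.sum_sub_distrib]

theorem zero_notMem_Qp {EH : Set (Fin n × Fin n)} (hEH : ∀ e ∈ EH, e.1 < e.2) :
    (0 : Fin n → ℝ) ∉ Qp n EH := fun h0 => by
  have hneg : Qp n EH ⊆ {x | ∑ i : Fin n, ((i : ℕ) : ℝ) * x i < 0} := by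
    refine convexHull_min ?_
      (convex_halfSpace_lt (dotProductBilin ℝ ℝ fun i : Fin n => ((i : ℕ) : ℝ)).isLinear 0)
    rintro _ ⟨e, he, rfl⟩
    simpa [sum_mul_vecOf] using hEH e he
  simpa using hneg h0

theorem vecOf_notMem_Qp {EH : Set (Fin n × Fin n)} {e : Fin n × Fin n} (he : e.1 ≠ e.2)
    (heH : e ∉ EH) : vecOf n e ∉ Qp n EH := fun hQ => by
  have hle : Qp n EH ⊆ {x | ∑ i, vecOf n e i * x i ≤ 1} := by
    refine convexHull_min ?_ (convex_halfSpace_le (dotProductBilin ℝ ℝ _).isLinear 1)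
    rintro _ ⟨f, hf, rfl⟩
    have hfe : f ≠ e := ne_of_mem_of_not_mem hf heH
    rw [Set.mem_ofPred_eq, sum_mul_vecOf]
    simp only [vecOf]
    split_ifs <;> simp_all [Prod.ext_iff]
    norm_num
  have := hle hQ
  rw [Set.mem_ofPred_eq, sum_mul_vecOf] at this
  norm_num [vecOf, he, he.symm] at this

end RootPolytope

section FacePotential

variable {n : ℕ} {E EH : Set (Fin n × Fin n)}

/-- `c` defines the supporting hyperplane `∑ i, c i * x i = -1` cutting `Q_H` out of `tilde Q_G`. -/
def IsFacePotential (E EH : Set (Fin n × Fin n)) (c : Fin n → ℝ) : Prop :=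
  (∀ e ∈ EH, c e.2 = c e.1 + 1) ∧ ∀ e ∈ E, e ∉ EH → c e.2 < c e.1 + 1

theorem isFace_of_isFacePotential (hH : EH ⊆ E) {c : Fin n → ℝ} (hc : IsFacePotential E EH c) :
    IsFace n (tQ n E) (Qp n EH) := by
  let f := dotProductBilin ℝ ℝ c
  have hf (x : Fin n → ℝ) : f x = ∑ i, c i * x i := rfl
  have hgen : ∀ x ∈ {0} ∪ vecOf n '' E, -1 ≤ f x := by
    rintro _ (rfl | ⟨e, he, rfl⟩)
    · simp
    · rw [hf, sum_mul_vecOf]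
      by_cases heH : e ∈ EH
      · linarith [hc.1 e heH]
      · linarith [hc.2 e he heH]
  have hlevel : ({0} ∪ vecOf n '' E) ∩ {x | f x = -1} ⊆ vecOf n '' EH := by
    rintro _ ⟨rfl | ⟨e, he, rfl⟩, hx⟩
    · norm_num [Set.mem_ofPred_eq] at hx
    · rw [Set.mem_ofPred_eq, hf, sum_mul_vecOf] at hx
      exact ⟨e, by_contra fun heH => by linarith [hc.2 e he heH], rfl⟩
  have hQ : Qp n EH ⊆ {x | f x = -1} := by
    refine convexHull_min ?_ (convex_hyperplane f.isLinear _)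
    rintro _ ⟨e, he, rfl⟩
    rw [Set.mem_ofPred_eq, hf, sum_mul_vecOf]
    linarith [hc.1 e he]
  refine ⟨c, -1, fun x hx => convexHull_min hgen (convex_halfSpace_ge f.isLinear _) hx, ?_⟩
  refine subset_antisymm (fun x hx => ⟨?_, hQ hx⟩)
    ((convexHull_inter_level_subset f hgen).trans (convexHull_mono hlevel))
  exact convexHull_mono (Set.subset_union_of_subset_right (Set.image_mono hH) _) hx

theorem exists_isFacePotential_of_isFace (hE : ∀ e ∈ E, e.1 < e.2) (hH : EH ⊆ E)
    (hface : IsFace n (tQ n E) (Qp n EH)) : ∃ c, IsFacePotential E EH c := by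
  obtain ⟨c, a, hle, hQ⟩ := hface
  have hvec {e} (he : e ∈ E) : vecOf n e ∈ tQ n E := subset_convexHull ℝ _ (Or.inr ⟨e, he, rfl⟩)
  have h0 : (0 : Fin n → ℝ) ∈ tQ n E := subset_convexHull ℝ _ (Or.inl rfl)
  have ha : a < 0 := by
    refine (by simpa using hle 0 h0 : a ≤ 0).lt_of_ne fun ha => ?_
    refine zero_notMem_Qp (fun e he => hE e (hH he)) ?_
    rw [hQ]
    exact ⟨h0, by simp [ha]⟩
  refine ⟨fun i => c i / -a, fun e he => ?_, fun e he heH => ?_⟩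
  · have hlevel : vecOf n e ∈ Qp n EH := subset_convexHull ℝ _ ⟨e, he, rfl⟩
    rw [hQ, Set.mem_ofPred_eq, sum_mul_vecOf] at hlevel
    show c e.2 / -a = c e.1 / -a + 1
    rw [div_add_one (by linarith)]
    congr 1
    linarith [hlevel.2]
  · have hlt : a < c e.1 - c e.2 := by
      rw [← sum_mul_vecOf]
      refine (hle _ (hvec he)).lt_of_ne fun h => vecOf_notMem_Qp (hE e he).ne heH ?_
      rw [hQ]
      exact ⟨hvec he, h.symm⟩
    show c e.2 / -a < c e.1 / -a + 1
    rw [div_add_one (by linarith), div_lt_div_iff_of_pos_right (by linarith)]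
    linarith

theorem isFace_iff_exists_isFacePotential (hE : ∀ e ∈ E, e.1 < e.2) (hH : EH ⊆ E) :
    IsFace n (tQ n E) (Qp n EH) ↔ ∃ c, IsFacePotential E EH c :=
  ⟨exists_isFacePotential_of_isFace hE hH, fun ⟨_, hc⟩ => isFace_of_isFacePotential hH hc⟩

end FacePotential

section Components

variable {n : ℕ} {E EH : Set (Fin n × Fin n)}

instance (EH : Set (Fin n × Fin n)) : Std.Symm (UAdj EH) := ⟨fun _ _ => Or.symm⟩

def sameCompSetoid (EH : Set (Fin n × Fin n)) : Setoid (Fin n) where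
  r := SameComp EH
  iseqv := ⟨fun _ => .refl, fun h => Std.Symm.symm (r := Relation.ReflTransGen (UAdj EH)) _ _ h,
    .trans⟩

theorem WalkVal.eq_add {c : Fin n → ℝ} (hc : ∀ e ∈ EH, c e.2 = c e.1 + 1) {i j : Fin n} {k : ℤ}
    (h : WalkVal EH i j k) : c j = c i + k := by
  induction h with
  | nil => simp
  | fwd _ he ih => push_cast; linarith [hc _ he]
  | bwd _ he ih => push_cast; linarith [hc _ he]

theorem pathConsistent_of_add_one {c : Fin n → ℝ} (hc : ∀ e ∈ EH, c e.2 = c e.1 + 1) :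
    PathConsistent EH := fun _ _ _ _ h₁ h₂ => by
  exact_mod_cast add_left_cancel ((h₁.eq_add hc).symm.trans (h₂.eq_add hc))

theorem SameComp.fract_eq {c : Fin n → ℝ} (hc : ∀ e ∈ EH, c e.2 = c e.1 + 1) {u v : Fin n}
    (h : SameComp EH u v) : Int.fract (c u) = Int.fract (c v) := by
  induction h with
  | refl => rfl
  | tail _ hadj ih =>
    rcases hadj with he | he <;> rw [ih, hc _ he, Int.fract_add_one]

theorem admissible_floor {c : Fin n → ℝ} (hc : IsFacePotential E EH c) :
    Admissible E EH (fun v => ⌊c v⌋) := by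
  intro k cyc hcyc hlink
  have hfract : ∑ i, Int.fract (c (cyc i).2) = ∑ i, Int.fract (c (cyc i).1) := by
    rw [← Equiv.sum_comp (Equiv.addRight (1 : Fin (k + 1))) (fun i => Int.fract (c (cyc i).1))]
    exact Finset.sum_congr rfl fun i _ => (hlink i).fract_eq hc.1
  have hsum : ∑ i, ((⌊c (cyc i).1⌋ - ⌊c (cyc i).2⌋ : ℤ) : ℝ) =
      ∑ i, (c (cyc i).1 - c (cyc i).2) := by
    simp only [Int.cast_sub, ← Int.self_sub_fract, Finset.sum_sub_distrib, hfract]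
    ring
  have hlt : -((k : ℝ) + 1) < ∑ i, (c (cyc i).1 - c (cyc i).2) :=
    calc -((k : ℝ) + 1) = ∑ _i : Fin (k + 1), (-1 : ℝ) := by simp
    _ < _ := Finset.sum_lt_sum_of_nonempty Finset.univ_nonempty fun i _ => by
      linarith [hc.2 _ (hcyc i).1 (hcyc i).2]
  rw [← hsum] at hlt
  exact_mod_cast hlt

theorem exists_isFacePotential_of_admissible {w : Fin n → ℤ} (hw : ∀ e ∈ EH, w e.2 = w e.1 + 1)
    (hadm : Admissible E EH w) : ∃ c, IsFacePotential E EH c := by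
  let comp : Fin n → Quotient (sameCompSetoid EH) := Quotient.mk _
  let X := {e : Fin n × Fin n // e ∈ E ∧ e ∉ EH}
  obtain ⟨φ, hφ⟩ := exists_strictPotential_of_cycle_pos (fun x : X => comp x.1.1)
    (fun x => comp x.1.2) (fun x => w x.1.1 - w x.1.2 + 1) fun k cyc hlink => by
      have := hadm k (fun i => (cyc i).1) (fun i => (cyc i).2) fun i => Quotient.exact (hlink i)
      simp only [Finset.sum_add_distrib, Finset.sum_const, Finset.card_univ, Fintype.card_fin,
        nsmul_eq_mul, mul_one]
      push_cast
      omega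
  refine ⟨fun v => w v + φ (comp v), fun e he => ?_, fun e he heH => ?_⟩
  · have hcomp : comp e.2 = comp e.1 := Quotient.sound (.single (Or.inr he))
    simp only [hcomp, hw e he]
    push_cast
    ring
  · have := hφ ⟨e, he, heH⟩
    push_cast at this ⊢
    linarith

end Components

/-- `Q_H` is a face of `tilde Q_G` iff `H` is path consistent and admissible. -/
theorem stmt11 (n : ℕ) (E EH : Set (Fin n × Fin n))
    (hE : ∀ e ∈ E, e.1 < e.2) (hH : EH ⊆ E) :
    IsFace n (tQ n E) (Qp n EH) ↔
      (PathConsistent EH ∧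
        ∃ w : Fin n → ℤ, (∀ e ∈ EH, w e.2 = w e.1 + 1) ∧ Admissible E EH w) := by
  rw [isFace_iff_exists_isFacePotential hE hH]
  constructor
  · rintro ⟨c, hc⟩
    refine ⟨pathConsistent_of_add_one hc.1, fun v => ⌊c v⌋, fun e he => ?_, admissible_floor hc⟩
    simp only [hc.1 e he, Int.floor_add_one]
  · rintro ⟨-, w, hw, hadm⟩
    exact exists_isFacePotential_of_admissible hw hadm
end

section
/- Let $K_n$ be the complete directed acyclic graph on $[n]$ with edges $(i,j)$ for $i < j$. A subgraph $H \subseteq K_n$ satisfies that $Q_H$ is a face of $\tilde Q_{K_n}$ if and only if there exist $0 = n_0 < n_1 < \dots < n_{\ell+1} = n$ and, for each $k$, disjoint subsets $L_k, R_k \subseteq (n_k, n_{k+1}] \cap \mathbb Z$, such that $E(H) = \{(i,j) : i \in L_k, j \in R_k \text{ for some } k\}$. -/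
/-- The edge set of the complete directed acyclic graph `K_n` on `[n]`. -/
def KnE (n : ℕ) : Set (Fin n × Fin n) := {e | e.1 < e.2}

section AuxLemmas


lemma isLinearMap_dot {n : ℕ} (c : Fin n → ℝ) :
    IsLinearMap ℝ (fun x : Fin n → ℝ => ∑ i, c i * x i) := by
  constructor
  · intro x y; simp [mul_add, Finset.sum_add_distrib]
  · intro r x; simp [Finset.mul_sum]; ring_nf
    exact Finset.sum_congr rfl fun i _ => by ring

lemma dot_vecOf {n : ℕ} (c : Fin n → ℝ) (e : Fin n × Fin n) :
    ∑ i, c i * vecOf n e i = c e.1 - c e.2 := by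
  simp [vecOf, mul_sub, Finset.sum_sub_distrib, mul_ite]

lemma dot_sum {n : ℕ} (c : Fin n → ℝ) {ι : Type} (t : Finset ι) (w : ι → ℝ)
    (z : ι → Fin n → ℝ) :
    ∑ k, c k * (∑ i ∈ t, w i • z i) k = ∑ i ∈ t, w i * ∑ k, c k * z i k := by
  simp only [Finset.sum_apply, Pi.smul_apply, smul_eq_mul, Finset.mul_sum]
  rw [Finset.sum_comm]
  exact Finset.sum_congr rfl fun i _ => Finset.sum_congr rfl fun k _ => by ring

lemma le_dot_convexHull {n : ℕ} {S : Set (Fin n → ℝ)} {c : Fin n → ℝ} {r : ℝ}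
    (h : ∀ s ∈ S, r ≤ ∑ i, c i * s i) {x : Fin n → ℝ} (hx : x ∈ convexHull ℝ S) :
    r ≤ ∑ i, c i * x i :=
  convexHull_min h (convex_halfSpace_ge (isLinearMap_dot c) r) hx

lemma dot_convexHull_le {n : ℕ} {S : Set (Fin n → ℝ)} {c : Fin n → ℝ} {r : ℝ}
    (h : ∀ s ∈ S, ∑ i, c i * s i ≤ r) {x : Fin n → ℝ} (hx : x ∈ convexHull ℝ S) :
    ∑ i, c i * x i ≤ r :=
  convexHull_min h (convex_halfSpace_le (isLinearMap_dot c) r) hx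

lemma face_convexHull {n : ℕ} {S : Set (Fin n → ℝ)} {c : Fin n → ℝ} {a : ℝ}
    (h : ∀ s ∈ S, a ≤ ∑ i, c i * s i) :
    {x ∈ convexHull ℝ S | ∑ i, c i * x i = a}
      = convexHull ℝ {s ∈ S | ∑ i, c i * s i = a} := by
  apply Set.Subset.antisymm
  · rintro x ⟨hxS, hxa⟩
    rw [convexHull_eq] at hxS
    obtain ⟨ι, t, w, z, hw0, hw1, hzS, hx⟩ := hxS
    classical
    rw [Finset.centerMass_eq_of_sum_1 t z hw1] at hx
    have hlin : ∑ i ∈ t, w i * ∑ k, c k * z i k = a := by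
      rw [← dot_sum c t w z, hx, hxa]
    have hzero : ∀ i ∈ t, w i * (∑ k, c k * z i k - a) = 0 := by
      rw [← Finset.sum_eq_zero_iff_of_nonneg
        (fun i hi => mul_nonneg (hw0 i hi) (sub_nonneg.2 (h _ (hzS i hi))))]
      have : ∑ i ∈ t, w i * (∑ k, c k * z i k - a)
          = (∑ i ∈ t, w i * ∑ k, c k * z i k) - (∑ i ∈ t, w i) * a := by
        rw [Finset.sum_mul, ← Finset.sum_sub_distrib]
        exact Finset.sum_congr rfl fun i _ => by ring
      rw [this, hlin, hw1]; ring
    have hx' : (t.filter fun i => w i ≠ 0).centerMass w z = x := by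
      rw [Finset.centerMass_filter_ne_zero, Finset.centerMass_eq_of_sum_1 t z hw1, hx]
    rw [← hx']
    apply Finset.centerMass_mem_convexHull
    · exact fun i hi => hw0 i (Finset.mem_filter.1 hi).1
    · rw [Finset.sum_filter_ne_zero, hw1]; norm_num
    · intro i hi
      obtain ⟨hit, hwi⟩ := Finset.mem_filter.1 hi
      refine ⟨hzS i hit, ?_⟩
      rcases mul_eq_zero.1 (hzero i hit) with h1 | h1
      · exact absurd h1 hwi
      · linarith [sub_eq_zero.1 h1]
  · intro x hx
    refine ⟨convexHull_mono (Set.sep_subset _ _) hx, le_antisymm ?_ ?_⟩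
    · exact dot_convexHull_le (fun s hs => le_of_eq hs.2) hx
    · exact le_dot_convexHull (fun s hs => ge_of_eq hs.2) hx

lemma overlap {n : ℕ} {c : Fin n → ℝ} {d : ℝ} (hd : 0 < d)
    (hc : ∀ u v : Fin n, u < v → c v ≤ c u + d)
    {i j k l m : Fin n} (hij : i < j) (hkl : k < l)
    (hcj : c j = c i + d) (hcl : c l = c k + d)
    (h1 : i ≤ m) (h2 : m ≤ j) (h3 : k ≤ m) (h4 : m ≤ l) : c i = c k := by
  have hik : c i ≤ c k := by
    by_cases h : k < j
    · have := hc k j h; linarith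
    · push_neg at h
      have hkj : k = j := le_antisymm (le_trans h3 h2) h
      have hik' : i < k := hkj.symm ▸ hij
      have := hc i l (lt_trans hik' hkl)
      have hck : c k = c j := by rw [hkj]
      linarith
  have hki : c k ≤ c i := by
    by_cases h : i < l
    · have := hc i l h; linarith
    · push_neg at h
      have hil : i = l := le_antisymm (le_trans h1 h4) h
      have hki' : k < i := hil.symm ▸ hkl
      have := hc k j (lt_trans hki' hij)
      have hci : c i = c l := by rw [hil]
      linarith
  linarith

lemma chain {n : ℕ} {EH : Set (Fin n × Fin n)} {c : Fin n → ℝ} {d : ℝ} (hd : 0 < d)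
    (hc : ∀ u v : Fin n, u < v → c v ≤ c u + d)
    (hE : ∀ e ∈ EH, e.1 < e.2 ∧ c e.2 = c e.1 + d)
    {i j j₀ : Fin n} (h₀ : (i, j₀) ∈ EH)
    (hnocut : ∀ p : Fin n, i ≤ p → p < j → ∃ e ∈ EH, e.1 ≤ p ∧ p < e.2) :
    ∀ m : ℕ, ∀ p : Fin n, p.val = m → i ≤ p → p < j →
      ∀ e ∈ EH, e.1 ≤ p → p < e.2 → c e.1 = c i := by
  intro m
  induction m using Nat.strong_induction_on with
  | _ m IH =>
    intro p hpm hip hpj e he he1 he2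
    obtain ⟨hee, hce⟩ := hE e he
    by_cases hpi : p = i
    · subst hpi
      obtain ⟨hij₀, hc₀⟩ := hE _ h₀
      exact overlap hd hc hee hij₀ hce hc₀ he1 (le_of_lt he2) le_rfl (le_of_lt hij₀)
    · have hip' : i < p := lt_of_le_of_ne hip (Ne.symm hpi)
      have hpv : 0 < p.val := lt_of_le_of_lt (Nat.zero_le _) (Fin.lt_def.1 hip')
      set p' : Fin n := ⟨p.val - 1, by omega⟩ with hp'
      have hip2 : i ≤ p' := by
        rw [Fin.le_def]; have := Fin.lt_def.1 hip'; simp [hp']; omega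
      have hpj2 : p' < j := by
        rw [Fin.lt_def]; have := Fin.lt_def.1 hpj; simp [hp']; omega
      obtain ⟨e', he', he'1, he'2⟩ := hnocut p' hip2 hpj2
      obtain ⟨hee', hce'⟩ := hE e' he'
      have hval : c e'.1 = c i := by
        subst hpm
        exact IH p'.val (by simp [hp']; omega) p' rfl hip2 hpj2 e' he' he'1 he'2
      have h5 : e'.1 ≤ p := le_trans he'1 (le_of_lt (by rw [Fin.lt_def]; simp [hp']; omega))
      have h6 : p ≤ e'.2 := by
        rw [Fin.le_def]; have := Fin.lt_def.1 he'2; simp [hp'] at this; omega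
      have := overlap hd hc hee hee' hce hce' he1 (le_of_lt he2) h5 h6
      rw [this, hval]

lemma vec_pair_le {n : ℕ} {e f : Fin n × Fin n} (he : e.1 < e.2) (hf : f.1 < f.2)
    (hne : f ≠ e) : vecOf n e f.1 - vecOf n e f.2 ≤ 1 := by
  simp only [vecOf]
  split_ifs with h1 h2 h3 h4 h3 h4 h3 h4 h3 h4 <;> norm_num <;>
    first
      | (exact absurd (Prod.ext h1 h4) hne)
      | (exact absurd (h1 ▸ h4 ▸ he) (lt_irrefl _))
      | (exact absurd (h1.symm.trans h2) he.ne)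
      | skip
  all_goals simp_all

end AuxLemmas

/-- `Q_H` is a face of `tilde Q_{K_n}` iff `H` is a disjoint union of alternating-induced
subgraphs of complete graphs on consecutive intervals of `[n]`: the intervals are the level
sets of a monotone map `b`, and the edges of `H` are the edges of `K_n` going from `L` to `R`
within an interval, for disjoint sets `L`, `R`. -/
theorem stmt18 (n : ℕ) (EH : Set (Fin n × Fin n)) (hH : EH ⊆ KnE n) :
    IsFace n (tQ n (KnE n)) (Qp n EH) ↔
      ∃ (b : Fin n → ℕ) (L R : Set (Fin n)), Monotone b ∧ Disjoint L R ∧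
        EH = {e : Fin n × Fin n |
          e.1 < e.2 ∧ e.1 ∈ L ∧ e.2 ∈ R ∧ b e.1 = b e.2} := by
  classical
  constructor
  · rintro ⟨c, a, hsupp, hF⟩
    by_cases hne : EH = ∅
    · refine ⟨fun _ => 0, ∅, ∅, monotone_const, disjoint_bot_left, ?_⟩
      subst hne; ext e; simp
    · obtain ⟨e₀, he₀⟩ := Set.nonempty_iff_ne_empty.2 hne
      have hgen : ∀ e ∈ KnE n, vecOf n e ∈ tQ n (KnE n) := fun e he =>
        subset_convexHull ℝ _ (Or.inr ⟨e, he, rfl⟩)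
      have h0P : (0 : Fin n → ℝ) ∈ tQ n (KnE n) :=
        subset_convexHull ℝ _ (Or.inl rfl)
      have ha0 : a ≤ 0 := by have := hsupp 0 h0P; simpa using this
      have h0Q : (0 : Fin n → ℝ) ∉ Qp n EH := by
        intro h0
        set w : Fin n → ℝ := fun i => -(((i : ℕ) : ℝ)) with hw
        have h1 : (1:ℝ) ≤ ∑ i, w i * (0 : Fin n → ℝ) i := by
          refine le_dot_convexHull ?_ h0
          rintro s ⟨e, he, rfl⟩
          rw [dot_vecOf]
          have hlt : (e.1 : ℕ) < (e.2 : ℕ) := hH he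
          have : ((e.1 : ℕ) : ℝ) + 1 ≤ ((e.2 : ℕ) : ℝ) := by exact_mod_cast hlt
          simp [hw]
          linarith
        have h2 : (1:ℝ) ≤ 0 := by simpa using h1
        linarith
      have ha : a < 0 := by
        rcases lt_or_eq_of_le ha0 with h | h
        · exact h
        · exfalso
          apply h0Q
          rw [hF]
          exact ⟨h0P, by simp [h]⟩
      have hchar : ∀ e : Fin n × Fin n, e ∈ EH ↔ (e.1 < e.2 ∧ c e.1 - c e.2 = a) := by
        intro e
        constructor
        · intro he
          refine ⟨hH he, ?_⟩
          have hv : vecOf n e ∈ Qp n EH := subset_convexHull ℝ _ ⟨e, he, rfl⟩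
          rw [hF] at hv
          rw [← dot_vecOf c e]
          exact hv.2
        · rintro ⟨hlt, heq⟩
          by_contra hne'
          have hv : vecOf n e ∈ Qp n EH := by
            rw [hF]
            exact ⟨hgen e hlt, by rw [dot_vecOf]; exact heq⟩
          have hb : ∑ i, vecOf n e i * vecOf n e i ≤ 1 := by
            refine dot_convexHull_le ?_ hv
            rintro s ⟨f, hf, rfl⟩
            rw [dot_vecOf]
            exact vec_pair_le hlt (hH hf) (fun h => hne' (h ▸ hf))
          have h2 : ∑ i, vecOf n e i * vecOf n e i = 2 := by
            rw [dot_vecOf]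
            simp [vecOf, hlt.ne, hlt.ne']
            norm_num
          linarith
      set d : ℝ := -a with hd'
      have hd : 0 < d := by simp [hd']; linarith
      have hc : ∀ u v : Fin n, u < v → c v ≤ c u + d := by
        intro u v huv
        have := hsupp (vecOf n (u, v)) (hgen (u, v) huv)
        rw [dot_vecOf] at this
        simp at this ⊢
        linarith
      have hE : ∀ e ∈ EH, e.1 < e.2 ∧ c e.2 = c e.1 + d := by
        intro e he
        obtain ⟨h1, h2⟩ := (hchar e).1 he
        exact ⟨h1, by simp [hd']; linarith⟩
      set L : Set (Fin n) := {i | ∃ j, (i, j) ∈ EH} with hL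
      set R : Set (Fin n) := {j | ∃ i, (i, j) ∈ EH} with hR
      have hLR : Disjoint L R := by
        rw [Set.disjoint_left]
        rintro i ⟨j, hj⟩ ⟨i', hi'⟩
        obtain ⟨hj1, hj2⟩ := hE _ hj
        obtain ⟨hi'1, hi'2⟩ := hE _ hi'
        simp only at hj1 hj2 hi'1 hi'2
        have : i' < j := lt_trans hi'1 hj1
        have := hc i' j this
        linarith
      set Cut : Fin n → Prop := fun p => ¬ ∃ e ∈ EH, e.1 ≤ p ∧ p < e.2 with hCut
      set b : Fin n → ℕ := fun i => (Finset.univ.filter (fun p : Fin n => p < i ∧ Cut p)).card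
        with hb'
      have hbmono : Monotone b := by
        intro i j hij
        apply Finset.card_le_card
        intro p hp
        simp only [Finset.mem_filter] at hp ⊢
        exact ⟨hp.1, lt_of_lt_of_le hp.2.1 hij, hp.2.2⟩
      refine ⟨b, L, R, hbmono, hLR, ?_⟩
      ext e
      simp only [Set.mem_setOf_eq]
      constructor
      · intro he
        obtain ⟨he1, he2⟩ := hE e he
        refine ⟨he1, ⟨e.2, by simpa using he⟩, ⟨e.1, by simpa using he⟩, ?_⟩
        have : (Finset.univ.filter (fun p : Fin n => p < e.1 ∧ Cut p))
            = (Finset.univ.filter (fun p : Fin n => p < e.2 ∧ Cut p)) := by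
          apply Finset.ext
          intro p
          simp only [Finset.mem_filter, Finset.mem_univ, true_and]
          constructor
          · rintro ⟨h1, h2⟩; exact ⟨lt_trans h1 he1, h2⟩
          · rintro ⟨h1, h2⟩
            refine ⟨?_, h2⟩
            by_contra h3
            push_neg at h3
            exact h2 ⟨e, he, h3, h1⟩
        simp only [hb']
        rw [this]
      · rintro ⟨hlt, ⟨j₀, hj₀⟩, ⟨i₂, hi₂⟩, hbe⟩
        -- no cuts in [e.1, e.2)
        have hsub : (Finset.univ.filter (fun p : Fin n => p < e.1 ∧ Cut p))
            ⊆ (Finset.univ.filter (fun p : Fin n => p < e.2 ∧ Cut p)) := by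
          intro p hp
          simp only [Finset.mem_filter] at hp ⊢
          exact ⟨hp.1, lt_trans hp.2.1 hlt, hp.2.2⟩
        have heqf : (Finset.univ.filter (fun p : Fin n => p < e.1 ∧ Cut p))
            = (Finset.univ.filter (fun p : Fin n => p < e.2 ∧ Cut p)) :=
          Finset.eq_of_subset_of_card_le hsub (le_of_eq hbe.symm)
        have hnocut : ∀ p : Fin n, e.1 ≤ p → p < e.2 → ∃ f ∈ EH, f.1 ≤ p ∧ p < f.2 := by
          intro p hp1 hp2
          by_contra h
          have hpmem : p ∈ (Finset.univ.filter (fun p : Fin n => p < e.2 ∧ Cut p)) := by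
            simp only [Finset.mem_filter, Finset.mem_univ, true_and]
            exact ⟨hp2, h⟩
          rw [← heqf] at hpmem
          simp only [Finset.mem_filter] at hpmem
          exact absurd hpmem.2.1 (not_lt.2 hp1)
        have hv2 : 0 < (e.2 : ℕ) := lt_of_le_of_lt (Nat.zero_le _) (Fin.lt_def.1 hlt)
        set p₁ : Fin n := ⟨(e.2 : ℕ) - 1, by omega⟩ with hp₁
        have hp11 : e.1 ≤ p₁ := by
          rw [Fin.le_def]; have := Fin.lt_def.1 hlt; simp [hp₁]; omega
        have hp12 : p₁ < e.2 := by
          rw [Fin.lt_def]; simp [hp₁]; omega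
        have hi₂1 : i₂ < e.2 := (hE _ hi₂).1
        have hi₂p : i₂ ≤ p₁ := by
          rw [Fin.le_def]; have := Fin.lt_def.1 hi₂1; simp [hp₁]; omega
        have hkey : c i₂ = c e.1 :=
          chain hd hc hE hj₀ hnocut p₁.val p₁ rfl hp11 hp12 (i₂, e.2) hi₂ hi₂p hp12
        have hc2 : c e.2 = c i₂ + d := (hE _ hi₂).2
        rw [hchar]
        refine ⟨hlt, ?_⟩
        rw [hc2, hkey]
        simp [hd']
  · rintro ⟨b, L, R, hb, hLR, hEH⟩
    set t : Fin n → ℝ := fun i => if i ∈ L then 0 else if i ∈ R then 1 else 1/2 with ht'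
    set c : Fin n → ℝ := fun i => t i - (b i : ℝ) with hc'
    have ht0 : ∀ k, (t k = 0 ↔ k ∈ L) ∧ (t k = 1 ↔ k ∈ R) ∧ 0 ≤ t k ∧ t k ≤ 1 := by
      intro k
      by_cases hkL : k ∈ L
      · have hkR : k ∉ R := fun h => Set.disjoint_left.1 hLR hkL h
        simp [ht', hkL, hkR]
      · by_cases hkR : k ∈ R
        · simp [ht', hkL, hkR]
        · simp [ht', hkL, hkR]; norm_num
      
    have key : ∀ i j : Fin n, i < j →
        (-1 ≤ c i - c j ∧ (c i - c j = -1 ↔ (i ∈ L ∧ j ∈ R ∧ b i = b j))) := by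
      intro i j hij
      obtain ⟨hiL, hiR, hi0, hi1⟩ := ht0 i
      obtain ⟨hjL, hjR, hj0, hj1⟩ := ht0 j
      have hbij : b i ≤ b j := hb (le_of_lt hij)
      rcases eq_or_lt_of_le hbij with hbeq | hblt
      · have hcc : c i - c j = t i - t j := by
          simp [hc', hbeq]
        constructor
        · rw [hcc]; linarith
        · rw [hcc]
          constructor
          · intro h
            have h1 : t i = 0 := by linarith
            have h2 : t j = 1 := by linarith
            exact ⟨hiL.1 h1, hjR.1 h2, hbeq⟩
          · rintro ⟨h1, h2, -⟩
            rw [hiL.2 h1, hjR.2 h2]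
            norm_num
      · have hge : (1:ℝ) ≤ (b j : ℝ) - (b i : ℝ) := by
          have h9 : b i + 1 ≤ b j := hblt
          have h10 : ((b i : ℕ) : ℝ) + 1 ≤ ((b j : ℕ) : ℝ) := by exact_mod_cast h9
          linarith
        have hcc : c i - c j = (t i - t j) + ((b j : ℝ) - (b i : ℝ)) := by
          simp [hc']; ring
        constructor
        · rw [hcc]; linarith
        · constructor
          · intro h; rw [hcc] at h; linarith
          · rintro ⟨-, -, h⟩; exact absurd h (Nat.ne_of_lt hblt)
    have hgenle : ∀ s ∈ ({0} ∪ vecOf n '' KnE n : Set (Fin n → ℝ)),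
        (-1 : ℝ) ≤ ∑ i, c i * s i := by
      rintro s (hs | ⟨e, he, rfl⟩)
      · rw [Set.mem_singleton_iff] at hs
        subst hs
        simp
      · rw [dot_vecOf]
        exact (key e.1 e.2 he).1
    refine ⟨c, -1, ?_, ?_⟩
    · intro x hx
      exact le_dot_convexHull hgenle hx
    · have hface := face_convexHull (S := ({0} ∪ vecOf n '' KnE n)) (c := c) (a := -1) hgenle
      show Qp n EH = {x ∈ convexHull ℝ ({0} ∪ vecOf n '' KnE n) | ∑ i, c i * x i = -1}
      rw [hface, Qp]
      congr 1
      ext s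
      constructor
      · rintro ⟨e, he, rfl⟩
        rw [hEH] at he
        obtain ⟨h0, h1, h2, h3⟩ := he
        refine ⟨Or.inr ⟨e, h0, rfl⟩, ?_⟩
        rw [dot_vecOf]
        exact ((key e.1 e.2 h0).2).2 ⟨h1, h2, h3⟩
      · rintro ⟨hs | ⟨e, he, rfl⟩, hds⟩
        · rw [Set.mem_singleton_iff] at hs
          subst hs
          simp at hds
        · have hde : c e.1 - c e.2 = -1 := by rw [← dot_vecOf c e]; exact hds
          obtain ⟨h1, h2, h3⟩ := ((key e.1 e.2 he).2).1 hde
          exact ⟨e, by rw [hEH]; exact ⟨he, h1, h2, h3⟩, rfl⟩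
end
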